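/- In the setup below, R(P,<,<') is Ehrhart-equivalent to both the order polytope O(P,<) and the chain polytope C(P,<): for every integer m ≥ 0, the three sets ℤ^P ∩ m·R(P,<,<'), ℤ^P ∩ m·O(P,<) and ℤ^P ∩ m·C(P,<) have the same cardinality. -/

import Mathlib

open Pointwise

/-- `J` is an order ideal (lower set) with respect to the strict order relation `r`. -/
def IsLowerIdeal {P : Type*} (r : P → P → Prop) (J : Set P) : Prop :=
  ∀ ⦃p q : P⦄, r p q → q ∈ J → p ∈ J

/-- The set of `r`-maximal elements of `J`. -/
def maxElems {P : Type*} (r : P → P → Prop) (J : Set P) : Set P :=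
  {p ∈ J | ∀ q ∈ J, ¬ r p q}

/-- The 0/1 indicator vector of `A ⊆ P`, as a point of `ℝ^P`. -/
noncomputable def ind {P : Type*} (A : Set P) : P → ℝ :=
  A.indicator 1

/-- The order ideal of `(P, r)` generated by `A`. -/
def genIdeal {P : Type*} (r : P → P → Prop) (A : Set P) : Set P :=
  {p | ∃ q ∈ A, p = q ∨ r p q}

/-- The Hibi–Li operation `J1 *' J2` relative to the order `r`: the order ideal of `(P, r)`
generated by `(J1 ∩ J2) ∩ (max_r J1 ∪ max_r J2)`. -/
def starOp {P : Type*} (r : P → P → Prop) (J1 J2 : Set P) : Set P :=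
  genIdeal r ((J1 ∩ J2) ∩ (maxElems r J1 ∪ maxElems r J2))

/-- The relative poset polytope `R(P, lt, lt')`: the convex hull of the points
`1_{max_{lt'} J}` over all order ideals `J` of `(P, lt)`. -/
noncomputable def RPP {P : Type*} (lt lt' : P → P → Prop) : Set (P → ℝ) :=
  convexHull ℝ {x | ∃ J : Set P, IsLowerIdeal lt J ∧ x = ind (maxElems lt' J)}

/-- The dilation `m·Q = {m·x : x ∈ Q}`. -/
def dilate {P : Type*} (m : ℕ) (Q : Set (P → ℝ)) : Set (P → ℝ) :=
  (fun x => (m : ℝ) • x) '' Q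

/-- The order polytope of `(P, lt)`. -/
def orderPolytope {P : Type*} (lt : P → P → Prop) : Set (P → ℝ) :=
  {x | (∀ p, 0 ≤ x p ∧ x p ≤ 1) ∧ ∀ p q, lt q p → x p ≤ x q}

/-- The chain polytope of `(P, lt)`. -/
def chainPolytope {P : Type*} (lt : P → P → Prop) : Set (P → ℝ) :=
  {x | (∀ p, 0 ≤ x p) ∧ ∀ (k : ℕ) (c : Fin k → P),
    (∀ i j : Fin k, i < j → lt (c i) (c j)) → (∑ i, x (c i)) ≤ 1}



/-!
Everything is reduced to lattice points of `m • O(P, <)` via Stanley's transfer map. For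
`y ≥ 0` let `maxChainSum y p` be the largest sum of `y` along a `<'`-chain starting at `p`; it is
inverted by `transfer x p = x p - max_{p <' q} x q`. A lattice point `y` lies in `m • C(P, <)`
iff `y ≥ 0` and all `<`-chain sums are at most `m`, i.e. iff `maxChainSum y ∈ m • O(P, <)`.

For `R(P, <, <')`, the identity `1_{max J} + 1_{max L} = 1_{max (J ∪ L)} + 1_{max (J *' L)}` lets
one uncross any convex representation of a point into one supported on a chain of ideals
(maximize `∑ w_J 2^|J|`), and along a chain `maxChainSum (∑ c_J 1_{max J}) = ∑ c_J 1_J`, a point of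
`m • O(P, <)`. Conversely a lattice point `x` of `m • O(P, <)` is the sum of the indicators of its
level sets `{x ≥ i}`, `1 ≤ i ≤ m`, and `transfer x` is the sum of the vertices
`1_{max_{<'} {x ≥ i}}` of `R(P, <, <')`.
-/

open Finset

section MaxChainSum

open Classical

variable {P : Type*} [Fintype P] {r : P → P → Prop}

-- `max {x q | r p q}`, with the convention `max ∅ = 0`; values are truncated at `0`, which is
-- harmless since it is only evaluated on nonnegative vectors.
noncomputable def supAbove (r : P → P → Prop) (x : P → ℤ) (p : P) : ℤ :=
  ((univ.filter (r p)).sup fun q => (x q).toNat : ℕ)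

lemma supAbove_nonneg (x : P → ℤ) (p : P) : 0 ≤ supAbove r x p := Int.natCast_nonneg _

lemma supAbove_congr {x x' : P → ℤ} {p : P} (h : ∀ q, r p q → x q = x' q) :
    supAbove r x p = supAbove r x' p := by
  unfold supAbove
  rw [Finset.sup_congr rfl fun q hq => by rw [h q (mem_filter.1 hq).2]]

lemma le_supAbove {x : P → ℤ} {p q : P} (hq : 0 ≤ x q) (hpq : r p q) : x q ≤ supAbove r x p := by
  have : (x q).toNat ≤ (univ.filter (r p)).sup fun q => (x q).toNat :=
    le_sup (f := fun q => (x q).toNat) (mem_filter.2 ⟨mem_univ q, hpq⟩)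
  unfold supAbove
  omega

lemma supAbove_eq_zero_or_exists {x : P → ℤ} (hx : 0 ≤ x) (p : P) :
    supAbove r x p = 0 ∨ ∃ q, r p q ∧ supAbove r x p = x q := by
  rcases (univ.filter (r p)).eq_empty_or_nonempty with hempty | hne
  · left
    simp [supAbove, hempty]
  · obtain ⟨q, hq, hsup⟩ := exists_mem_eq_sup _ hne fun q => (x q).toNat
    right
    refine ⟨q, (mem_filter.1 hq).2, ?_⟩
    simp only [supAbove, hsup, Int.toNat_of_nonneg (hx q)]

lemma supAbove_le {x : P → ℤ} (hx : 0 ≤ x) {p : P} {n : ℤ} (hn : 0 ≤ n)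
    (h : ∀ q, r p q → x q ≤ n) : supAbove r x p ≤ n := by
  rcases supAbove_eq_zero_or_exists (r := r) hx p with h0 | ⟨q, hpq, hq⟩
  · rw [h0]; exact hn
  · rw [hq]; exact h q hpq

noncomputable def maxChainSum (hwf : WellFounded (flip r)) (y : P → ℤ) : P → ℤ :=
  hwf.fix fun p ih => y p + supAbove r (fun q => if h : r p q then ih q h else 0) p

noncomputable def transfer (r : P → P → Prop) (x : P → ℤ) : P → ℤ :=
  fun p => x p - supAbove r x p

variable (hwf : WellFounded (flip r)) {y : P → ℤ}

lemma maxChainSum_eq (y : P → ℤ) (p : P) :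
    maxChainSum hwf y p = y p + supAbove r (maxChainSum hwf y) p := by
  rw [maxChainSum, hwf.fix_eq]
  exact congrArg _ (supAbove_congr fun q hpq => dif_pos hpq)

lemma le_maxChainSum (y : P → ℤ) (p : P) : y p ≤ maxChainSum hwf y p := by
  rw [maxChainSum_eq hwf y p]
  exact le_add_of_nonneg_right (supAbove_nonneg _ p)

lemma maxChainSum_nonneg (hy : 0 ≤ y) : 0 ≤ maxChainSum hwf y := fun p =>
  (hy p).trans (le_maxChainSum hwf y p)

lemma add_maxChainSum_le (hy : 0 ≤ y) {p q : P} (hpq : r p q) :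
    y p + maxChainSum hwf y q ≤ maxChainSum hwf y p := by
  rw [maxChainSum_eq hwf y p]
  exact add_le_add_right (le_supAbove (maxChainSum_nonneg hwf hy q) hpq) _

lemma maxChainSum_anti (hy : 0 ≤ y) {p q : P} (hpq : r p q) :
    maxChainSum hwf y q ≤ maxChainSum hwf y p :=
  (le_add_of_nonneg_left (hy p)).trans (add_maxChainSum_le hwf hy hpq)

lemma transfer_maxChainSum (y : P → ℤ) : transfer r (maxChainSum hwf y) = y :=
  funext fun p => by rw [transfer, maxChainSum_eq hwf y p]; ring

lemma transfer_nonneg {x : P → ℤ} (hx : 0 ≤ x) (hanti : ∀ p q, r p q → x q ≤ x p) :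
    0 ≤ transfer r x := fun p =>
  sub_nonneg.2 (supAbove_le hx (hx p) (hanti p))

lemma maxChainSum_transfer (x : P → ℤ) :
    maxChainSum hwf (transfer r x) = x := by
  funext p
  induction p using hwf.induction with
  | _ p ih =>
    rw [maxChainSum_eq, supAbove_congr ih, transfer]
    ring

end MaxChainSum

section Chains

variable {P : Type*} [Fintype P] {r : P → P → Prop} (hwf : WellFounded (flip r)) {y : P → ℤ}

lemma exists_chain_sum_eq_maxChainSum (htr : ∀ a b c, r a b → r b c → r a c) (hy : 0 ≤ y)
    (p : P) : ∃ (k : ℕ) (c : Fin (k + 1) → P), c 0 = p ∧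
      (∀ i j, i < j → r (c i) (c j)) ∧ ∑ i, y (c i) = maxChainSum hwf y p := by
  induction p using hwf.induction with
  | _ p ih =>
    rcases supAbove_eq_zero_or_exists (r := r) (maxChainSum_nonneg hwf hy) p with h0 | ⟨q, hpq, hq⟩
    · refine ⟨0, fun _ => p, rfl, fun i j hij => absurd hij (by omega), ?_⟩
      simp [maxChainSum_eq hwf y p, h0]
    · obtain ⟨k, c, hc0, hc, hsum⟩ := ih q hpq
      refine ⟨k + 1, Fin.cons p c, rfl, fun i j hij => ?_, ?_⟩
      · induction j using Fin.cases with
        | zero => exact absurd hij (Fin.not_lt_zero i)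
        | succ j =>
          induction i using Fin.cases with
          | zero =>
            rcases eq_or_ne j 0 with rfl | hj
            · simpa [hc0] using hpq
            · simpa using htr _ _ _ (hc0 ▸ hpq) (hc 0 j (Fin.pos_iff_ne_zero.2 hj))
          | succ i => simpa using hc i j (Fin.succ_lt_succ_iff.1 hij)
      · rw [Fin.sum_univ_succ]
        simp only [Fin.cons_zero, Fin.cons_succ]
        rw [hsum, maxChainSum_eq hwf y p, hq]

lemma sum_chain_le_maxChainSum (hy : 0 ≤ y) {k : ℕ} (c : Fin (k + 1) → P)
    (hc : ∀ i j, i < j → r (c i) (c j)) : ∑ i, y (c i) ≤ maxChainSum hwf y (c 0) := by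
  induction k with
  | zero =>
    simpa [maxChainSum_eq hwf y (c 0)] using supAbove_nonneg (r := r) (maxChainSum hwf y) (c 0)
  | succ k ih =>
    rw [Fin.sum_univ_succ]
    have htail := ih (fun i => c i.succ) fun i j hij => hc _ _ (Fin.succ_lt_succ_iff.2 hij)
    exact (add_le_add_right htail _).trans (add_maxChainSum_le hwf hy (hc 0 1 Fin.zero_lt_one))

lemma chain_sums_le_iff_maxChainSum_le (htr : ∀ a b c, r a b → r b c → r a c) (hy : 0 ≤ y)
    {n : ℤ} (hn : 0 ≤ n) :
    (∀ (k : ℕ) (c : Fin k → P), (∀ i j, i < j → r (c i) (c j)) → ∑ i, y (c i) ≤ n) ↔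
      ∀ p, maxChainSum hwf y p ≤ n := by
  constructor
  · intro h p
    obtain ⟨k, c, -, hc, hsum⟩ := exists_chain_sum_eq_maxChainSum hwf htr hy p
    exact hsum ▸ h _ c hc
  · rintro h (_ | k) c hc
    · simpa using hn
    · exact (sum_chain_le_maxChainSum hwf hy c hc).trans (h _)

end Chains

section MaximalElements

variable {P : Type*} {r : P → P → Prop} {J L : Set P} {p : P}

open Classical in
lemma ind_apply (A : Set P) (p : P) : ind A p = if p ∈ A then 1 else 0 := by
  simp [ind, Set.indicator_apply]

lemma maxElems_subset (r : P → P → Prop) (J : Set P) : maxElems r J ⊆ J := fun _ hp => hp.1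

lemma IsLowerIdeal.mono {r' : P → P → Prop} (h : ∀ p q, r' p q → r p q)
    (hJ : IsLowerIdeal r J) : IsLowerIdeal r' J :=
  fun _ _ hpq hq => hJ (h _ _ hpq) hq

lemma IsLowerIdeal.union (hJ : IsLowerIdeal r J) (hL : IsLowerIdeal r L) :
    IsLowerIdeal r (J ∪ L) := by
  rintro p q hpq (hq | hq)
  exacts [Or.inl (hJ hpq hq), Or.inr (hL hpq hq)]

lemma starOp_subset_inter (hJ : IsLowerIdeal r J) (hL : IsLowerIdeal r L) :
    starOp r J L ⊆ J ∩ L := by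
  rintro p ⟨q, ⟨hqJL, -⟩, rfl | hpq⟩
  exacts [hqJL, ⟨hJ hpq hqJL.1, hL hpq hqJL.2⟩]

lemma mem_maxElems_union_iff (hJ : IsLowerIdeal r J) (hL : IsLowerIdeal r L) :
    p ∈ maxElems r (J ∪ L) ↔
      p ∈ J ∪ L ∧ (p ∈ J → p ∈ maxElems r J) ∧ (p ∈ L → p ∈ maxElems r L) := by
  constructor
  · rintro ⟨hp, hmax⟩
    exact ⟨hp, fun hpJ => ⟨hpJ, fun q hq => hmax q (Or.inl hq)⟩,
      fun hpL => ⟨hpL, fun q hq => hmax q (Or.inr hq)⟩⟩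
  · rintro ⟨hp, hJmax, hLmax⟩
    refine ⟨hp, fun q hq hpq => ?_⟩
    rcases hq with hq | hq
    exacts [(hJmax (hJ hpq hq)).2 q hq hpq, (hLmax (hL hpq hq)).2 q hq hpq]

lemma mem_maxElems_starOp_iff (hJ : IsLowerIdeal r J) (hL : IsLowerIdeal r L) :
    p ∈ maxElems r (starOp r J L) ↔
      p ∈ J ∩ L ∧ (p ∈ maxElems r J ∨ p ∈ maxElems r L) := by
  constructor
  · rintro ⟨⟨q, hq, rfl | hpq⟩, hmax⟩
    exacts [hq, absurd hpq (hmax q ⟨q, hq, Or.inl rfl⟩)]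
  · intro hp
    refine ⟨⟨p, hp, Or.inl rfl⟩, fun q hq hpq => ?_⟩
    have hqJL := starOp_subset_inter hJ hL hq
    rcases hp.2 with hmax | hmax
    exacts [hmax.2 q hqJL.1 hpq, hmax.2 q hqJL.2 hpq]

lemma ind_nonneg (A : Set P) (p : P) : 0 ≤ ind A p := by
  rw [ind_apply]; split_ifs <;> norm_num

lemma ind_le_ind_of_subset {A B : Set P} (h : A ⊆ B) (p : P) : ind A p ≤ ind B p :=
  Set.indicator_le_indicator_of_subset h (fun _ => zero_le_one) p

lemma ind_le_one (A : Set P) (p : P) : ind A p ≤ 1 := by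
  rw [ind_apply]; split_ifs <;> norm_num

lemma IsLowerIdeal.ind_le (hJ : IsLowerIdeal r J) {p q : P} (hqp : r q p) : ind J p ≤ ind J q := by
  by_cases hp : p ∈ J
  · simp [ind_apply, hp, hJ hqp hp]
  · rw [ind_apply J p, if_neg hp]
    exact ind_nonneg J q

lemma ind_maxElems_add_ind_le {L : Set P} (hL : IsLowerIdeal r L) {p q : P} (hpq : r p q) :
    ind (maxElems r L) p + ind L q ≤ ind L p := by
  by_cases hq : q ∈ L
  · have hpmax : p ∉ maxElems r L := fun hmax => hmax.2 q hq hpq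
    simp [ind_apply, hq, hL hpq hq, hpmax]
  · rw [ind_apply L q, if_neg hq, add_zero]
    exact ind_le_ind_of_subset (maxElems_subset r L) p

lemma ind_le_ind_maxElems_of_imp {L : Set P} {p : P} (h : p ∈ L → p ∈ maxElems r L) :
    ind L p ≤ ind (maxElems r L) p := by
  simp only [ind_apply]
  split_ifs <;> simp_all

lemma ind_le_ind_maxElems_add {L : Set P} {p q : P}
    (h : p ∈ L → p ∉ maxElems r L → q ∈ L) :
    ind L p ≤ ind (maxElems r L) p + ind L q := by
  simp only [ind_apply]
  split_ifs <;> simp_all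

lemma ind_maxElems_union_add_ind_maxElems_starOp (hJ : IsLowerIdeal r J)
    (hL : IsLowerIdeal r L) :
    ind (maxElems r (J ∪ L)) + ind (maxElems r (starOp r J L)) =
      ind (maxElems r J) + ind (maxElems r L) := by
  funext p
  have hJsub := @maxElems_subset _ r J p
  have hLsub := @maxElems_subset _ r L p
  have hU := mem_maxElems_union_iff (p := p) hJ hL
  have hS := mem_maxElems_starOp_iff (p := p) hJ hL
  simp only [Pi.add_apply, ind_apply]
  by_cases hpJ : p ∈ J <;> by_cases hpL : p ∈ L <;>
    by_cases hmJ : p ∈ maxElems r J <;> by_cases hmL : p ∈ maxElems r L <;>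
    simp_all

end MaximalElements

section LevelSets

open Classical

variable {P : Type*} [Fintype P] {r : P → P → Prop} {x : P → ℤ}

lemma mem_maxElems_levelSet_iff (hx : 0 ≤ x) {i : ℤ} (hi : 0 < i) (p : P) :
    p ∈ maxElems r {q | i ≤ x q} ↔ i ≤ x p ∧ supAbove r x p < i := by
  constructor
  · rintro ⟨hp, hmax⟩
    refine ⟨hp, lt_of_not_ge fun hle => ?_⟩
    rcases supAbove_eq_zero_or_exists (r := r) hx p with h0 | ⟨q, hpq, hq⟩
    · omega
    · exact hmax q (show i ≤ x q by omega) hpq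
  · rintro ⟨hp, hlt⟩
    exact ⟨hp, fun q hq hpq => absurd ((le_supAbove (hx q) hpq).trans_lt hlt) (not_lt.2 hq)⟩

lemma sum_Icc_ite_le {m : ℕ} {a : ℤ} (ha : 0 ≤ a) (ham : a ≤ m) :
    ∑ i ∈ Icc 1 m, (if (i : ℤ) ≤ a then (1 : ℝ) else 0) = a := by
  rw [sum_boole, show (Icc 1 m).filter (fun i : ℕ => (i : ℤ) ≤ a) = Icc 1 a.toNat by
    ext i; simp only [mem_filter, mem_Icc]; omega]
  rw [Nat.card_Icc, Nat.add_sub_cancel]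
  exact_mod_cast Int.toNat_of_nonneg ha

lemma cast_transfer_eq_sum_ind {m : ℕ} (hx : 0 ≤ x) (hxm : ∀ p, x p ≤ m)
    (hanti : ∀ p q, r p q → x q ≤ x p) :
    (fun p => (transfer r x p : ℝ)) = ∑ i ∈ Icc 1 m, ind (maxElems r {q | (i : ℤ) ≤ x q}) := by
  funext p
  have hs : supAbove r x p ≤ x p := supAbove_le hx (hx p) (hanti p)
  have hterm : ∀ i ∈ Icc 1 m, ind (maxElems r {q | (i : ℤ) ≤ x q}) p =
      (if (i : ℤ) ≤ x p then 1 else 0) - (if (i : ℤ) ≤ supAbove r x p then 1 else 0) := by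
    intro i hi
    rw [ind_apply, mem_maxElems_levelSet_iff hx (by simp at hi; omega)]
    split_ifs <;> norm_num <;> omega
  rw [Finset.sum_apply, sum_congr rfl hterm, sum_sub_distrib, sum_Icc_ite_le (hx p) (hxm p),
    sum_Icc_ite_le (supAbove_nonneg x p) (hs.trans (hxm p)), transfer]
  push_cast
  ring

end LevelSets

section ChainRepresentation

open Classical

variable {P ι : Type*} [Fintype ι] {r : P → P → Prop} {y : P → ℤ} {c : ι → ℝ} {J : ι → Set P}

variable (hrep : ∀ p, (y p : ℝ) = ∑ i, c i * ind (maxElems r (J i)) p) (hc : 0 ≤ c)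
include hrep hc

lemma nonneg_of_eq_sum_ind_maxElems : 0 ≤ y := fun p => by
  have : (0 : ℝ) ≤ y p := hrep p ▸ sum_nonneg fun i _ => mul_nonneg (hc i) (ind_nonneg _ p)
  exact_mod_cast this

lemma le_sum_ind_of_eq_sum_ind_maxElems (p : P) : (y p : ℝ) ≤ ∑ i, c i * ind (J i) p :=
  hrep p ▸ sum_le_sum fun i _ =>
    mul_le_mul_of_nonneg_left (ind_le_ind_of_subset (maxElems_subset r _) p) (hc i)

lemma add_sum_ind_le_of_eq_sum_ind_maxElems (hJ : ∀ i, IsLowerIdeal r (J i)) {p q : P}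
    (hpq : r p q) : (y p : ℝ) + ∑ i, c i * ind (J i) q ≤ ∑ i, c i * ind (J i) p := by
  rw [hrep p, ← sum_add_distrib]
  exact sum_le_sum fun i _ => by
    rw [← mul_add]; exact mul_le_mul_of_nonneg_left (ind_maxElems_add_ind_le (hJ i) hpq) (hc i)

lemma sum_ind_le_of_eq_sum_ind_maxElems [Finite P]
    (hchain : IsChain (fun i j => J i ⊆ J j) (Function.support c)) (p : P) :
    ∑ i, c i * ind (J i) p ≤ y p ∨
      ∃ q, r p q ∧ ∑ i, c i * ind (J i) p ≤ y p + ∑ i, c i * ind (J i) q := by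
  set T := univ.filter fun i => c i ≠ 0 ∧ p ∈ J i ∧ p ∉ maxElems r (J i)
  rcases T.eq_empty_or_nonempty with hT | hT
  · left
    simp only [T, filter_eq_empty_iff, mem_univ, true_implies] at hT
    rw [hrep p]
    refine sum_le_sum fun i _ => ?_
    by_cases hci : c i = 0
    · simp [hci]
    exact mul_le_mul_of_nonneg_left
      (ind_le_ind_maxElems_of_imp fun hp => by_contra fun hpmax => hT ⟨hci, hp, hpmax⟩) (hc i)
  · right
    obtain ⟨i₀, hi₀, hmin⟩ := T.exists_min_image (fun i => (J i).ncard) hT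
    obtain ⟨hci₀, hpJ₀, hpmax₀⟩ := (mem_filter.1 hi₀).2
    obtain ⟨q, hqJ₀, hpq⟩ : ∃ q ∈ J i₀, r p q := by
      by_contra! h
      exact hpmax₀ ⟨hpJ₀, fun q hq hpq => h q hq hpq⟩
    have hsub : ∀ i ∈ T, J i₀ ⊆ J i := by
      intro i hi
      rcases eq_or_ne i₀ i with rfl | hne
      · exact subset_rfl
      rcases hchain hci₀ (mem_filter.1 hi).2.1 hne with h | h
      · exact h
      · exact (Set.eq_of_subset_of_ncard_le h (hmin i hi)).ge
    refine ⟨q, hpq, ?_⟩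
    rw [hrep p, ← sum_add_distrib]
    refine sum_le_sum fun i _ => ?_
    by_cases hci : c i = 0
    · simp [hci]
    rw [← mul_add]
    refine mul_le_mul_of_nonneg_left (ind_le_ind_maxElems_add fun hp hpmax => ?_) (hc i)
    exact hsub i (mem_filter.2 ⟨mem_univ i, hci, hp, hpmax⟩) hqJ₀

lemma maxChainSum_eq_sum_ind [Fintype P] (hwf : WellFounded (flip r))
    (hJ : ∀ i, IsLowerIdeal r (J i))
    (hchain : IsChain (fun i j => J i ⊆ J j) (Function.support c)) (p : P) :
    (maxChainSum hwf y p : ℝ) = ∑ i, c i * ind (J i) p := by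
  have hy := nonneg_of_eq_sum_ind_maxElems hrep hc
  apply le_antisymm
  · induction p using hwf.induction with
    | _ p ih =>
      rw [maxChainSum_eq]
      rcases supAbove_eq_zero_or_exists (r := r) (maxChainSum_nonneg hwf hy) p with
        h0 | ⟨q, hpq, hq⟩
      · simpa [h0] using le_sum_ind_of_eq_sum_ind_maxElems hrep hc p
      · push_cast [hq]
        linarith [ih q hpq, add_sum_ind_le_of_eq_sum_ind_maxElems hrep hc hJ hpq]
  · have hle : ∀ {p q}, r p q → (y p : ℝ) + maxChainSum hwf y q ≤ maxChainSum hwf y p :=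
      fun hpq => by exact_mod_cast add_maxChainSum_le hwf hy hpq
    induction p using hwf.induction with
    | _ p ih =>
      rcases sum_ind_le_of_eq_sum_ind_maxElems hrep hc hchain p with h | ⟨q, hpq, h⟩
      · exact h.trans (by exact_mod_cast le_maxChainSum hwf y p)
      · linarith [ih q hpq, hle hpq]

end ChainRepresentation

section Dilation

variable {P : Type*} {Q : Set (P → ℝ)} {m : ℕ} {x : P → ℝ}

lemma mem_dilate_iff_inv_smul_mem (hm : m ≠ 0) : x ∈ dilate m Q ↔ (m : ℝ)⁻¹ • x ∈ Q := by
  rw [dilate, Set.image_smul, Set.mem_smul_set_iff_inv_smul_mem₀ (Nat.cast_ne_zero.2 hm)]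

lemma dilate_zero (hQ : Q.Nonempty) : dilate 0 Q = {0} := by
  rw [dilate, Set.image_smul, Nat.cast_zero, Set.zero_smul_set hQ, ← Set.singleton_zero]

lemma sum_mem_dilate (hQ : Convex ℝ Q) (hne : Q.Nonempty) {ι : Type*} (s : Finset ι)
    {f : ι → P → ℝ} (hf : ∀ i ∈ s, f i ∈ Q) : ∑ i ∈ s, f i ∈ dilate s.card Q := by
  rcases s.eq_empty_or_nonempty with rfl | hs
  · simp [dilate_zero hne]
  · have hcard : (s.card : ℝ) ≠ 0 := Nat.cast_ne_zero.2 hs.card_pos.ne'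
    rw [mem_dilate_iff_inv_smul_mem hs.card_pos.ne', smul_sum]
    exact hQ.sum_mem (fun _ _ => by positivity) (by simp [hcard]) hf

lemma mem_dilate_orderPolytope_iff {lt : P → P → Prop} :
    x ∈ dilate m (orderPolytope lt) ↔
      (∀ p, 0 ≤ x p ∧ x p ≤ m) ∧ ∀ p q, lt q p → x p ≤ x q := by
  rcases eq_or_ne m 0 with rfl | hm
  · rw [dilate_zero ⟨0, by simp [orderPolytope]⟩, Set.mem_singleton_iff]
    constructor
    · rintro rfl
      simp
    · rintro ⟨hx, -⟩
      funext p
      exact le_antisymm (by simpa using (hx p).2) (hx p).1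
  · have hm' : (0 : ℝ) < m := by positivity
    simp only [mem_dilate_iff_inv_smul_mem hm, orderPolytope, Set.mem_ofPred_eq, Pi.smul_apply,
      smul_eq_mul, inv_mul_le_iff₀ hm', mul_one, mul_inv_cancel_left₀ hm'.ne',
      mul_nonneg_iff_of_pos_left (inv_pos.2 hm')]

lemma sum_ind_mem_dilate_orderPolytope {lt : P → P → Prop} {ι : Type*} [Fintype ι]
    {c : ι → ℝ} (hc : 0 ≤ c) (hcm : ∑ i, c i = m) {J : ι → Set P}
    (hJ : ∀ i, IsLowerIdeal lt (J i)) :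
    (fun p => ∑ i, c i * ind (J i) p) ∈ dilate m (orderPolytope lt) := by
  refine mem_dilate_orderPolytope_iff.2 ⟨fun p => ⟨?_, ?_⟩, fun p q hqp => ?_⟩
  · exact sum_nonneg fun i _ => mul_nonneg (hc i) (ind_nonneg _ p)
  · exact hcm ▸ sum_le_sum fun i _ => mul_le_of_le_one_right (hc i) (ind_le_one _ p)
  · exact sum_le_sum fun i _ => mul_le_mul_of_nonneg_left ((hJ i).ind_le hqp) (hc i)

lemma mem_dilate_chainPolytope_iff {lt : P → P → Prop} :
    x ∈ dilate m (chainPolytope lt) ↔ (∀ p, 0 ≤ x p) ∧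
      ∀ (k : ℕ) (c : Fin k → P), (∀ i j, i < j → lt (c i) (c j)) → ∑ i, x (c i) ≤ m := by
  rcases eq_or_ne m 0 with rfl | hm
  · rw [dilate_zero ⟨0, by simp [chainPolytope]⟩, Set.mem_singleton_iff]
    constructor
    · rintro rfl
      simp
    · rintro ⟨hx, hc⟩
      funext p
      simpa using le_antisymm (by simpa using hc 1 (fun _ => p) (by simp)) (hx p)
  · have hm' : (0 : ℝ) < m := by positivity
    simp only [mem_dilate_iff_inv_smul_mem hm, chainPolytope, Set.mem_ofPred_eq, Pi.smul_apply,
      smul_eq_mul, ← mul_sum, inv_mul_le_iff₀ hm', mul_one,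
      mul_nonneg_iff_of_pos_left (inv_pos.2 hm')]

end Dilation

section Uncrossing

variable {α E : Type*} [Fintype α] [AddCommGroup E] [Module ℝ E]

lemma convexHull_range_eq_image_stdSimplex (v : α → E) :
    convexHull ℝ (Set.range v) = Fintype.linearCombination ℝ v '' stdSimplex ℝ α := by
  classical
  rw [← convexHull_rangle_single_eq_stdSimplex, LinearMap.image_convexHull, ← Set.range_comp]
  congr
  funext a
  simp [Fintype.linearCombination_apply_single]

lemma linearCombination_single_add_single_sub_single_sub_single [DecidableEq α] {M : Type*}
    [AddCommGroup M] [Module ℝ M] (u : α → M) (a b c d : α) :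
    Fintype.linearCombination ℝ u
        (Pi.single a 1 + Pi.single b 1 - Pi.single c 1 - Pi.single d 1) =
      u a + u b - u c - u d := by
  simp [Fintype.linearCombination_apply_single]

-- A weighting maximizing `∑ a, w a * h a` in its fibre cannot charge two incomparable points:
-- moving mass `ε` from `a, b` to `sup a b, inf a b` would stay in the fibre and raise it.
theorem exists_mem_stdSimplex_isChain_support (r : α → α → Prop) (v : α → E) (h : α → ℝ)
    (sup inf : α → α → α)
    (hv : ∀ a b, ¬ r a b → ¬ r b a → v (sup a b) + v (inf a b) = v a + v b)
    (hh : ∀ a b, ¬ r a b → ¬ r b a → h a + h b < h (sup a b) + h (inf a b))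
    {w : α → ℝ} (hw : w ∈ stdSimplex ℝ α) :
    ∃ w' ∈ stdSimplex ℝ α, Fintype.linearCombination ℝ v w' = Fintype.linearCombination ℝ v w ∧
      IsChain r (Function.support w') := by
  classical
  set L := Fintype.linearCombination ℝ v
  set Φ := Fintype.linearCombination ℝ h
  have hfibre : IsClosed {w' | L w' = L w} := by
    have : {w' | L w' = L w} = (· - w) ⁻¹' (LinearMap.ker L : Set (α → ℝ)) := by
      ext w'
      simp [sub_eq_zero]
    rw [this]
    exact (LinearMap.ker L).closed_of_finiteDimensional.preimage (by fun_prop)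
  obtain ⟨w', ⟨hw'S, hw'L⟩, hmax⟩ := ((isCompact_stdSimplex ℝ α).inter_right hfibre).exists_isMaxOn
    ⟨w, hw, rfl⟩ Φ.continuous_of_finiteDimensional.continuousOn
  refine ⟨w', hw'S, hw'L, fun a ha b hb hab => ?_⟩
  by_contra! hrab
  set ε := min (w' a) (w' b)
  have hε : 0 < ε := lt_min ((hw'S.1 a).lt_of_ne' ha) ((hw'S.1 b).lt_of_ne' hb)
  set d : α → ℝ := Pi.single (sup a b) 1 + Pi.single (inf a b) 1 - Pi.single a 1 - Pi.single b 1
  have hLd : L d = v (sup a b) + v (inf a b) - v a - v b :=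
    linearCombination_single_add_single_sub_single_sub_single v _ _ _ _
  have hΦd : Φ d = h (sup a b) + h (inf a b) - h a - h b :=
    linearCombination_single_add_single_sub_single_sub_single h _ _ _ _
  have hsumd : ∑ x, d x = 0 := by
    simp [d, sum_add_distrib, sum_sub_distrib]
  have hmem : w' + ε • d ∈ stdSimplex ℝ α ∩ {w'' | L w'' = L w} := by
    refine ⟨⟨fun x => ?_, ?_⟩, ?_⟩
    · have : ε ≤ w' a := min_le_left _ _
      have : ε ≤ w' b := min_le_right _ _
      have := hw'S.1 x
      simp only [d, Pi.add_apply, Pi.sub_apply, Pi.smul_apply, smul_eq_mul, Pi.single_apply]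
      split_ifs <;> subst_vars <;> first | exact absurd rfl hab | nlinarith
    · simp only [Pi.add_apply, Pi.smul_apply, smul_eq_mul, sum_add_distrib, ← mul_sum, hsumd,
        hw'S.2, mul_zero, add_zero]
    · change L (w' + ε • d) = L w
      rw [map_add, map_smul, hLd, hv a b hrab.1 hrab.2, hw'L]
      simp
  have hgain : Φ w' < Φ (w' + ε • d) := by
    rw [map_add, map_smul, hΦd, smul_eq_mul]
    nlinarith [hh a b hrab.1 hrab.2]
  exact (hmax hmem).not_gt hgain

end Uncrossing

section RelativePosetPolytope

open Classical

variable {P : Type*} {lt lt' : P → P → Prop}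

lemma two_pow_ncard_add_two_pow_ncard_lt [Finite P] {J L : Set P} (hJL : ¬ J ⊆ L) (hLJ : ¬ L ⊆ J)
    (T : Set P) : (2 : ℝ) ^ J.ncard + 2 ^ L.ncard < 2 ^ (J ∪ L).ncard + 2 ^ T.ncard := by
  have hJ : J.ncard < (J ∪ L).ncard :=
    Set.ncard_lt_ncard ⟨Set.subset_union_left, fun h => hLJ (Set.subset_union_right.trans h)⟩
  have hL : L.ncard < (J ∪ L).ncard :=
    Set.ncard_lt_ncard ⟨Set.subset_union_right, fun h => hJL (Set.subset_union_left.trans h)⟩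
  obtain ⟨n, hn⟩ : ∃ n, (J ∪ L).ncard = n + 1 := ⟨_, (Nat.succ_pred_eq_of_pos (by omega)).symm⟩
  have hJn : (2 : ℝ) ^ J.ncard ≤ 2 ^ n := pow_le_pow_right₀ one_le_two (by omega)
  have hLn : (2 : ℝ) ^ L.ncard ≤ 2 ^ n := pow_le_pow_right₀ one_le_two (by omega)
  rw [hn, pow_succ]
  linarith [pow_pos (two_pos (α := ℝ)) T.ncard]

lemma convex_RPP : Convex ℝ (RPP lt lt') := convex_convexHull ℝ _

lemma ind_maxElems_mem_RPP {J : Set P} (hJ : IsLowerIdeal lt J) :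
    ind (maxElems lt' J) ∈ RPP lt lt' :=
  subset_convexHull ℝ _ ⟨J, hJ, rfl⟩

lemma RPP_eq_convexHull_range :
    RPP lt lt' = convexHull ℝ (Set.range fun J : {J : Set P // IsLowerIdeal lt J} =>
      ind (maxElems lt' J.1)) := by
  rw [RPP]
  congr
  ext x
  exact ⟨fun ⟨J, hJ, hx⟩ => ⟨⟨J, hJ⟩, hx.symm⟩, fun ⟨J, hx⟩ => ⟨J.1, J.2, hx.symm⟩⟩

lemma exists_isChain_of_mem_RPP [Fintype P] (hweak : ∀ p q, lt' p q → lt p q)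
    (hstar : ∀ J1 J2 : Set P, IsLowerIdeal lt J1 → IsLowerIdeal lt J2 →
      IsLowerIdeal lt (starOp lt' J1 J2))
    {x : P → ℝ} (hx : x ∈ RPP lt lt') :
    ∃ w ∈ stdSimplex ℝ {J : Set P // IsLowerIdeal lt J},
      ∑ J, w J • ind (maxElems lt' J.1) = x ∧
      IsChain (fun J L : {J : Set P // IsLowerIdeal lt J} => J.1 ⊆ L.1) (Function.support w) := by
  rw [RPP_eq_convexHull_range, convexHull_range_eq_image_stdSimplex] at hx
  obtain ⟨w, hw, rfl⟩ := hx
  obtain ⟨w', hw', hw'x, hchain⟩ := exists_mem_stdSimplex_isChain_support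
    (fun J L : {J : Set P // IsLowerIdeal lt J} => J.1 ⊆ L.1) (fun J => ind (maxElems lt' J.1))
    (fun J => 2 ^ J.1.ncard)
    (fun J L => ⟨J.1 ∪ L.1, J.2.union L.2⟩) (fun J L => ⟨starOp lt' J.1 L.1, hstar _ _ J.2 L.2⟩)
    (fun J L _ _ => ind_maxElems_union_add_ind_maxElems_starOp (J.2.mono hweak) (L.2.mono hweak))
    (fun J L hJL hLJ => two_pow_ncard_add_two_pow_ncard_lt hJL hLJ _) hw
  exact ⟨w', hw', by rw [← Fintype.linearCombination_apply, hw'x], hchain⟩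

end RelativePosetPolytope

section LatticePoints

open Classical

variable {P : Type*} [Fintype P] {lt lt' : P → P → Prop}

lemma wellFounded_flip_of_finite {r : P → P → Prop} (hirr : ∀ p, ¬ r p p)
    (htr : ∀ a b c, r a b → r b c → r a c) : WellFounded (flip r) :=
  haveI : IsTrans P (flip r) := ⟨fun a b c hab hbc => htr c b a hbc hab⟩
  haveI : Std.Irrefl (flip r) := ⟨hirr⟩
  Finite.wellFounded_of_trans_of_irrefl _

lemma mem_dilate_RPP_iff (hwf : WellFounded (flip lt')) (hweak : ∀ p q, lt' p q → lt p q)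
    (hstar : ∀ J1 J2 : Set P, IsLowerIdeal lt J1 → IsLowerIdeal lt J2 →
      IsLowerIdeal lt (starOp lt' J1 J2)) (m : ℕ) (y : P → ℤ) :
    (fun p => (y p : ℝ)) ∈ dilate m (RPP lt lt') ↔
      0 ≤ y ∧ (fun p => (maxChainSum hwf y p : ℝ)) ∈ dilate m (orderPolytope lt) := by
  constructor
  · rintro ⟨x, hx, hxy⟩
    obtain ⟨w, hw, hwx, hchain⟩ := exists_isChain_of_mem_RPP hweak hstar hx
    set c := fun J => (m : ℝ) * w J
    have hc : 0 ≤ c := fun J => mul_nonneg (Nat.cast_nonneg m) (hw.1 J)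
    have hrep : ∀ p, (y p : ℝ) = ∑ J, c J * ind (maxElems lt' J.1) p := fun p => by
      rw [← congrFun hxy p, ← hwx]
      simp [c, mul_sum, mul_assoc]
    have hmcs := maxChainSum_eq_sum_ind hrep hc hwf (fun J => J.2.mono hweak)
      (hchain.mono fun J hJ => right_ne_zero_of_mul hJ)
    refine ⟨nonneg_of_eq_sum_ind_maxElems hrep hc, funext hmcs ▸ ?_⟩
    exact sum_ind_mem_dilate_orderPolytope hc (by rw [← mul_sum, hw.2, mul_one]) fun J => J.2
  · rintro ⟨hy, hmem⟩
    obtain ⟨hbound, hanti⟩ := mem_dilate_orderPolytope_iff.1 hmem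
    have hlevel : ∀ i : ℕ, IsLowerIdeal lt {q | (i : ℤ) ≤ maxChainSum hwf y q} :=
      fun i p q hpq hq => hq.trans (by exact_mod_cast hanti q p hpq)
    have hsum := cast_transfer_eq_sum_ind (maxChainSum_nonneg hwf hy)
      (fun p => by exact_mod_cast (hbound p).2) fun p q hpq => maxChainSum_anti hwf hy hpq
    rw [transfer_maxChainSum] at hsum
    rw [hsum]
    simpa using sum_mem_dilate (Q := RPP lt lt') convex_RPP
      ⟨_, ind_maxElems_mem_RPP (fun _ _ _ h => h : IsLowerIdeal lt ∅)⟩ (Icc 1 m)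
      fun i _ => ind_maxElems_mem_RPP (hlevel i)

lemma mem_dilate_chainPolytope_iff_maxChainSum (hwf : WellFounded (flip lt))
    (htr : ∀ a b c, lt a b → lt b c → lt a c) (m : ℕ) (y : P → ℤ) :
    (fun p => (y p : ℝ)) ∈ dilate m (chainPolytope lt) ↔
      0 ≤ y ∧ (fun p => (maxChainSum hwf y p : ℝ)) ∈ dilate m (orderPolytope lt) := by
  rw [mem_dilate_chainPolytope_iff, mem_dilate_orderPolytope_iff]
  constructor
  · rintro ⟨hy, hchain⟩
    have hy : 0 ≤ y := fun p => by exact_mod_cast hy p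
    have hle := (chain_sums_le_iff_maxChainSum_le hwf htr hy (Nat.cast_nonneg m)).1
      fun k c hc => by exact_mod_cast hchain k c hc
    exact ⟨hy, fun p => ⟨by exact_mod_cast maxChainSum_nonneg hwf hy p, by exact_mod_cast hle p⟩,
      fun p q hqp => by exact_mod_cast maxChainSum_anti hwf hy hqp⟩
  · rintro ⟨hy, hbound, -⟩
    refine ⟨fun p => by exact_mod_cast hy p, fun k c hc => ?_⟩
    exact_mod_cast (chain_sums_le_iff_maxChainSum_le hwf htr hy (Nat.cast_nonneg m)).2
      (fun p => by exact_mod_cast (hbound p).2) k c hc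

lemma transfer_nonneg_of_mem_dilate_orderPolytope {r : P → P → Prop}
    (hweak : ∀ p q, r p q → lt p q) {m : ℕ} {x : P → ℤ}
    (hx : (fun p => (x p : ℝ)) ∈ dilate m (orderPolytope lt)) : 0 ≤ transfer r x := by
  obtain ⟨hbound, hanti⟩ := mem_dilate_orderPolytope_iff.1 hx
  exact transfer_nonneg (fun p => by exact_mod_cast (hbound p).1)
    fun p q hpq => by exact_mod_cast hanti q p (hweak p q hpq)

lemma card_eq_card_of_iff_maxChainSum {r : P → P → Prop} (hwf : WellFounded (flip r))
    {S Q : (P → ℤ) → Prop} (hS : ∀ y, S y ↔ 0 ≤ y ∧ Q (maxChainSum hwf y))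
    (hQ : ∀ x, Q x → 0 ≤ transfer r x) :
    Nat.card {y // S y} = Nat.card {x // Q x} :=
  Nat.card_congr
    { toFun := fun y => ⟨maxChainSum hwf y, ((hS y).1 y.2).2⟩
      invFun := fun x => ⟨transfer r x, (hS _).2 ⟨hQ x x.2, by rw [maxChainSum_transfer]; exact x.2⟩⟩
      left_inv := fun y => Subtype.ext (transfer_maxChainSum hwf y)
      right_inv := fun x => Subtype.ext (maxChainSum_transfer hwf x) }

end LatticePoints

/-- `R(P, lt, lt')` is Ehrhart-equivalent to both the order polytope `O(P, lt)` and the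
chain polytope `C(P, lt)`: for every `m ≥ 0` the three dilations have the same number of
integer points. -/
theorem stmt6 {P : Type*} [Fintype P] (lt lt' : P → P → Prop)
    (hltirr : ∀ p, ¬ lt p p) (hlttr : ∀ a b c, lt a b → lt b c → lt a c)
    (hlt'irr : ∀ p, ¬ lt' p p) (hlt'tr : ∀ a b c, lt' a b → lt' b c → lt' a c)
    (hweak : ∀ p q, lt' p q → lt p q)
    (hstar : ∀ J1 J2 : Set P, IsLowerIdeal lt J1 → IsLowerIdeal lt J2 →
      IsLowerIdeal lt (starOp lt' J1 J2))
    (m : ℕ) :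
    Nat.card {x : P → ℤ // (fun p => (x p : ℝ)) ∈ dilate m (RPP lt lt')} =
      Nat.card {x : P → ℤ // (fun p => (x p : ℝ)) ∈ dilate m (orderPolytope lt)} ∧
    Nat.card {x : P → ℤ // (fun p => (x p : ℝ)) ∈ dilate m (RPP lt lt')} =
      Nat.card {x : P → ℤ // (fun p => (x p : ℝ)) ∈ dilate m (chainPolytope lt)} := by
  have hwf' := wellFounded_flip_of_finite hlt'irr hlt'tr
  have hwf := wellFounded_flip_of_finite hltirr hlttr
  have hR := card_eq_card_of_iff_maxChainSum hwf' (mem_dilate_RPP_iff hwf' hweak hstar m)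
    fun _ => transfer_nonneg_of_mem_dilate_orderPolytope hweak
  have hC := card_eq_card_of_iff_maxChainSum hwf
    (mem_dilate_chainPolytope_iff_maxChainSum hwf hlttr m)
    fun _ => transfer_nonneg_of_mem_dilate_orderPolytope fun _ _ h => h
  exact ⟨hR, hR.trans hC.symm⟩
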